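/- arXiv:1907.08652 — 3 statements merged into one kernel-verified Lean document; each statement's English description precedes it below -/
import Mathlib

section
/- Let f : M → M be a hyperbolic homeomorphism with local product structure on a compact metric space (M,d) with contraction exponent λ, let A : M → GL(d,ℝ) be ν-Hölder continuous, α an automorphism of GL(d,ℝ), suppose the α-twisted cocycle A_α is fiber-bunched with constants ρ, θ, and let δ > 0 and γ ∈ (0, λ) satisfy 4ρ + δ < νγ. Then for every C₁ > 0 there exists a constant C' > 0, depending only on A, α, f, δ, γ and C₁, such that: whenever x, y ∈ M and n ∈ ℕ satisfy d(f^k(x), f^k(y)) ≤ C₁ e^{-γk} d(x,y) for every 0 ≤ k ≤ n, one has ‖α^{-k}(A_α^k(y))‖ · ‖α^{-k}(A_α^k(x)^{-1})‖ ≤ C' e^{(4ρ + 2θ + δ)k} for every 0 ≤ k ≤ n. -/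
open scoped Matrix.Norms.L2Operator

noncomputable section

/-- The `α`-twisted cocycle generated by `A` over `f`, at nonnegative times. -/
def twcN {M G : Type*} [Group G] (f : Equiv.Perm M) (α : MulAut G) (A : M → G) :
    ℕ → M → G
  | 0, _ => 1
  | n + 1, x => A ((f ^ n) x) * α (twcN f α A n x)

/-- The `α`-twisted cocycle generated by `A` over `f`, at all integer times. -/
def twc {M G : Type*} [Group G] (f : Equiv.Perm M) (α : MulAut G) (A : M → G) :
    ℤ → M → G
  | Int.ofNat n, x => twcN f α A n x
  | Int.negSucc n, x =>
      (α ^ (Int.negSucc n)) ((twcN f α A (n + 1) ((f ^ (Int.negSucc n)) x))⁻¹)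

/-- The local stable set `W^s_ε(x)`. -/
def localStable {M : Type*} [MetricSpace M] (f : Equiv.Perm M) (ε : ℝ) (x : M) :
    Set M :=
  {y | ∀ n : ℕ, dist ((f ^ n) x) ((f ^ n) y) ≤ ε}

/-- The local unstable set `W^u_ε(x)`. -/
def localUnstable {M : Type*} [MetricSpace M] (f : Equiv.Perm M) (ε : ℝ) (x : M) :
    Set M :=
  {y | ∀ n : ℕ, dist ((f⁻¹ ^ n) x) ((f⁻¹ ^ n) y) ≤ ε}

/-- The global stable set `W^s(x) = ⋃_{n ≥ 0} f^{-n}(W^s_ε(f^n(x)))`. -/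
def globalStable {M : Type*} [MetricSpace M] (f : Equiv.Perm M) (ε : ℝ) (x : M) :
    Set M :=
  {y | ∃ n : ℕ, (f ^ n) y ∈ localStable f ε ((f ^ n) x)}

/-- The global unstable set `W^u(x) = ⋃_{n ≥ 0} f^{n}(W^u_ε(f^{-n}(x)))`. -/
def globalUnstable {M : Type*} [MetricSpace M] (f : Equiv.Perm M) (ε : ℝ) (x : M) :
    Set M :=
  {y | ∃ n : ℕ, (f⁻¹ ^ n) y ∈ localUnstable f ε ((f⁻¹ ^ n) x)}

/-- `f` is a hyperbolic homeomorphism with local product structure, with constants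
`C, ε, λ, τ`. -/
structure IsHyperbolicLPS {M : Type*} [MetricSpace M] (f : M ≃ₜ M)
    (C ε lam τ : ℝ) : Prop where
  C_pos : 0 < C
  eps_pos : 0 < ε
  lam_pos : 0 < lam
  tau_pos : 0 < τ
  stable_contr : ∀ x y₁ y₂ : M, y₁ ∈ localStable f.toEquiv ε x →
    y₂ ∈ localStable f.toEquiv ε x → ∀ n : ℕ,
      dist ((f.toEquiv ^ n) y₁) ((f.toEquiv ^ n) y₂) ≤
        C * Real.exp (-lam * n) * dist y₁ y₂
  unstable_contr : ∀ x y₁ y₂ : M, y₁ ∈ localUnstable f.toEquiv ε x →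
    y₂ ∈ localUnstable f.toEquiv ε x → ∀ n : ℕ,
      dist ((f.toEquiv⁻¹ ^ n) y₁) ((f.toEquiv⁻¹ ^ n) y₂) ≤
        C * Real.exp (-lam * n) * dist y₁ y₂
  bracket : ∃ br : {p : M × M // dist p.1 p.2 ≤ τ} → M, Continuous br ∧
    ∀ p : {p : M × M // dist p.1 p.2 ≤ τ},
      localStable f.toEquiv ε p.1.1 ∩ localUnstable f.toEquiv ε p.1.2 = {br p}

/-- `A` is `ν`-Hölder continuous (w.r.t. the operator norm on matrices). -/
def IsHolder {M : Type*} [MetricSpace M] {d : ℕ} (ν : ℝ)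
    (A : M → GL (Fin d) ℝ) : Prop :=
  ∃ C > 0, ∀ x y : M,
    ‖(A x : Matrix (Fin d) (Fin d) ℝ) - (A y : Matrix (Fin d) (Fin d) ℝ)‖ ≤
      C * dist x y ^ ν

/-- The fiber-bunching inequalities (i), (ii), (iii) with constants `ρ, θ`. -/
def FiberBunchedWith {M : Type*} [MetricSpace M] {d : ℕ} (f : Equiv.Perm M)
    (α : MulAut (GL (Fin d) ℝ)) (A : M → GL (Fin d) ℝ) (ρ θ : ℝ) : Prop :=
  ∃ C > 0,
    (∀ (n : ℤ) (x : M),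
      ‖(((α ^ (-n)) (twc f α A n x) : GL (Fin d) ℝ) : Matrix (Fin d) (Fin d) ℝ)‖ *
        ‖(((α ^ (-n)) ((twc f α A n x)⁻¹) : GL (Fin d) ℝ) : Matrix (Fin d) (Fin d) ℝ)‖ <
        C * Real.exp (θ * |(n : ℝ)|)) ∧
    (∀ (n : ℤ) (T₁ T₂ : GL (Fin d) ℝ),
      ‖(((α ^ n) T₁ : GL (Fin d) ℝ) : Matrix (Fin d) (Fin d) ℝ) -
          (((α ^ n) T₂ : GL (Fin d) ℝ) : Matrix (Fin d) (Fin d) ℝ)‖ ≤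
        C * Real.exp (ρ * |(n : ℝ)|) *
          ‖(T₁ : Matrix (Fin d) (Fin d) ℝ) - (T₂ : Matrix (Fin d) (Fin d) ℝ)‖) ∧
    (∀ (n : ℤ) (T : GL (Fin d) ℝ),
      ‖(((α ^ n) T : GL (Fin d) ℝ) : Matrix (Fin d) (Fin d) ℝ)‖ ≤
        C * Real.exp (ρ * |(n : ℝ)|) * ‖(T : Matrix (Fin d) (Fin d) ℝ)‖)

/-- The twisted cocycle generated by `A` is fiber-bunched. -/
def FiberBunched {M : Type*} [MetricSpace M] {d : ℕ} (f : Equiv.Perm M)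
    (α : MulAut (GL (Fin d) ℝ)) (A : M → GL (Fin d) ℝ) (ν lam : ℝ) : Prop :=
  ∃ ρ θ : ℝ, 0 < ρ ∧ 0 < θ ∧ 5 * ρ + 2 * θ < ν * lam ∧ FiberBunchedWith f α A ρ θ

/-- `H` is the stable holonomy `H^{s,A,α}_{a b}`. -/
def IsStableHol {M : Type*} [MetricSpace M] {d : ℕ} (f : Equiv.Perm M)
    (α : MulAut (GL (Fin d) ℝ)) (A : M → GL (Fin d) ℝ) (a b : M)
    (H : GL (Fin d) ℝ) : Prop :=
  Filter.Tendsto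
    (fun n : ℕ =>
      (((α ^ (-(n : ℤ))) ((twc f α A n b)⁻¹ * twc f α A n a) : GL (Fin d) ℝ) :
        Matrix (Fin d) (Fin d) ℝ))
    Filter.atTop (nhds (H : Matrix (Fin d) (Fin d) ℝ))

/-- `H` is the unstable holonomy `H^{u,A,α}_{a b}`. -/
def IsUnstableHol {M : Type*} [MetricSpace M] {d : ℕ} (f : Equiv.Perm M)
    (α : MulAut (GL (Fin d) ℝ)) (A : M → GL (Fin d) ℝ) (a b : M)
    (H : GL (Fin d) ℝ) : Prop :=
  Filter.Tendsto
    (fun n : ℕ =>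
      (((α ^ (n : ℤ)) ((twc f α A (-(n : ℤ)) b)⁻¹ * twc f α A (-(n : ℤ)) a) :
          GL (Fin d) ℝ) : Matrix (Fin d) (Fin d) ℝ))
    Filter.atTop (nhds (H : Matrix (Fin d) (Fin d) ℝ))

end

/-!
Fiber bunching bounds the condition number `‖P‖ ‖P⁻¹‖` of `P = α^{-k}(A_α^k(z))` by
`C e^{θk}`, and for such a matrix the norm is controlled by the determinant:
`‖P‖^d ≤ (‖P‖ ‖P⁻¹‖)^d |det P|`. It therefore suffices to compare the determinants along the
orbits of `x` and `y`. The determinant is multiplicative along the cocycle, and the `l`-th factors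
differ by `α^{-(l+1)}(A(f^l y) A(f^l x)⁻¹)`, which is `O(e^{(ρ - νγ) l})`-close to the identity by
fiber bunching (ii), Hölder continuity and shadowing. As `ρ < νγ` these errors are summable, so
the ratio of determinants stays bounded, which gives the estimate even with `2θ` in place of
`4ρ + 2θ + δ`.
-/

namespace Matrix

variable {n : Type*} [Fintype n] [DecidableEq n]

open MeasureTheory in
theorem abs_det_le_l2_opNorm_pow (A : Matrix n n ℝ) : |A.det| ≤ ‖A‖ ^ Fintype.card n := by
  -- `A` maps the unit ball into the ball of radius `‖A‖`; compare their volumes.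
  have hsub : toEuclideanLin A '' Metric.closedBall (0 : EuclideanSpace ℝ n) 1 ⊆
      Metric.closedBall 0 ‖A‖ := by
    rintro _ ⟨x, hx, rfl⟩
    rw [mem_closedBall_zero_iff] at hx ⊢
    exact (l2_opNorm_mulVec A x).trans (mul_le_of_le_one_right (norm_nonneg A) hx)
  have hvol := measure_mono (μ := volume) hsub
  rw [Measure.addHaar_image_linearMap, LinearMap.det_toLpLin,
    Measure.addHaar_closedBall _ _ zero_le_one, Measure.addHaar_closedBall _ _ (norm_nonneg A),
    finrank_euclideanSpace, one_pow, ENNReal.ofReal_one, one_mul] at hvol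
  rwa [ENNReal.mul_le_mul_iff_left (Metric.measure_ball_pos _ _ one_pos).ne'
    measure_ball_lt_top.ne, ENNReal.ofReal_le_ofReal_iff (by positivity)] at hvol

theorem l2_opNorm_one_le : ‖(1 : Matrix n n ℝ)‖ ≤ 1 := by
  rw [← diagonal_one, l2_opNorm_diagonal]
  exact (pi_norm_const_le (1 : ℝ)).trans norm_one.le

theorem abs_det_le_one_add_norm_sub_one_pow (A : Matrix n n ℝ) :
    |A.det| ≤ (1 + ‖A - 1‖) ^ Fintype.card n := by
  refine (abs_det_le_l2_opNorm_pow A).trans (pow_le_pow_left₀ (norm_nonneg _) ?_ _)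
  calc ‖A‖ = ‖1 + (A - 1)‖ := by rw [add_sub_cancel]
    _ ≤ ‖(1 : Matrix n n ℝ)‖ + ‖A - 1‖ := norm_add_le _ _
    _ ≤ 1 + ‖A - 1‖ := by gcongr; exact l2_opNorm_one_le

namespace GeneralLinearGroup

theorem abs_det_inv_mul_abs_det (u : GL n ℝ) :
    |((u⁻¹ : GL n ℝ) : Matrix n n ℝ).det| * |(u : Matrix n n ℝ).det| = 1 := by
  rw [← abs_mul, ← det_mul, ← Units.val_mul, inv_mul_cancel, Units.val_one, det_one, abs_one]

theorem norm_pow_le_mul_abs_det (u : GL n ℝ) :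
    ‖(u : Matrix n n ℝ)‖ ^ Fintype.card n ≤
      (‖(u : Matrix n n ℝ)‖ * ‖((u⁻¹ : GL n ℝ) : Matrix n n ℝ)‖) ^ Fintype.card n *
        |(u : Matrix n n ℝ).det| :=
  calc ‖(u : Matrix n n ℝ)‖ ^ Fintype.card n
      = ‖(u : Matrix n n ℝ)‖ ^ Fintype.card n *
          (|((u⁻¹ : GL n ℝ) : Matrix n n ℝ).det| * |(u : Matrix n n ℝ).det|) := by
        rw [abs_det_inv_mul_abs_det, mul_one]
    _ ≤ ‖(u : Matrix n n ℝ)‖ ^ Fintype.card n *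
          (‖((u⁻¹ : GL n ℝ) : Matrix n n ℝ)‖ ^ Fintype.card n * |(u : Matrix n n ℝ).det|) := by
        gcongr; exact abs_det_le_l2_opNorm_pow _
    _ = _ := by rw [mul_pow, mul_assoc]

theorem norm_mul_norm_inv_le_of_abs_det_le (u v : GL n ℝ) {B P : ℝ} (hP : 0 ≤ P)
    (hu : ‖(u : Matrix n n ℝ)‖ * ‖((u⁻¹ : GL n ℝ) : Matrix n n ℝ)‖ ≤ B)
    (hv : ‖(v : Matrix n n ℝ)‖ * ‖((v⁻¹ : GL n ℝ) : Matrix n n ℝ)‖ ≤ B)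
    (hdet : |(u : Matrix n n ℝ).det| ≤ P ^ Fintype.card n * |(v : Matrix n n ℝ).det|) :
    ‖(u : Matrix n n ℝ)‖ * ‖((v⁻¹ : GL n ℝ) : Matrix n n ℝ)‖ ≤ B ^ 2 * P := by
  have hB : 0 ≤ B := (by positivity : (0 : ℝ) ≤ _).trans hu
  rcases isEmpty_or_nonempty n with hn | hn
  · rw [Subsingleton.elim (u : Matrix n n ℝ) 0, norm_zero, zero_mul]
    positivity
  have hv' := norm_pow_le_mul_abs_det v⁻¹
  rw [inv_inv, mul_comm ‖((v⁻¹ : GL n ℝ) : Matrix n n ℝ)‖] at hv'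
  refine le_of_pow_le_pow_left₀ (Fintype.card_ne_zero (α := n)) (by positivity) ?_
  calc (‖(u : Matrix n n ℝ)‖ * ‖((v⁻¹ : GL n ℝ) : Matrix n n ℝ)‖) ^ Fintype.card n
      ≤ (B ^ Fintype.card n * |(u : Matrix n n ℝ).det|) *
          (B ^ Fintype.card n * |((v⁻¹ : GL n ℝ) : Matrix n n ℝ).det|) := by
        rw [mul_pow]
        gcongr
        · exact (norm_pow_le_mul_abs_det u).trans (by gcongr)
        · exact hv'.trans (by gcongr)
    _ ≤ (B ^ Fintype.card n * (P ^ Fintype.card n * |(v : Matrix n n ℝ).det|)) *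
          (B ^ Fintype.card n * |((v⁻¹ : GL n ℝ) : Matrix n n ℝ).det|) := by gcongr
    _ = (B ^ 2 * P) ^ Fintype.card n := by
        linear_combination (B ^ 2 * P) ^ Fintype.card n * abs_det_inv_mul_abs_det v

theorem abs_det_map_le (β : MulAut (GL n ℝ)) {L : ℝ} (hL : 0 ≤ L)
    (hβ : ∀ T : GL n ℝ, ‖(β T : Matrix n n ℝ) - 1‖ ≤ L * ‖(T : Matrix n n ℝ) - 1‖)
    (T₁ T₂ : GL n ℝ) :
    |(β T₁ : Matrix n n ℝ).det| ≤
      (1 + L * (‖(T₁ : Matrix n n ℝ) - T₂‖ * ‖((T₂⁻¹ : GL n ℝ) : Matrix n n ℝ)‖)) ^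
        Fintype.card n * |(β T₂ : Matrix n n ℝ).det| := by
  have hsplit : β T₁ = β (T₁ * T₂⁻¹) * β T₂ := by rw [← map_mul, inv_mul_cancel_right]
  have hquot : ((T₁ * T₂⁻¹ : GL n ℝ) : Matrix n n ℝ) - 1 =
      ((T₁ : Matrix n n ℝ) - T₂) * ((T₂⁻¹ : GL n ℝ) : Matrix n n ℝ) := by
    rw [Units.val_mul, sub_mul, ← Units.val_mul T₂, mul_inv_cancel, Units.val_one]
  rw [hsplit, Units.val_mul, det_mul, abs_mul]
  gcongr
  calc |(β (T₁ * T₂⁻¹) : Matrix n n ℝ).det|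
      ≤ (1 + ‖(β (T₁ * T₂⁻¹) : Matrix n n ℝ) - 1‖) ^ Fintype.card n :=
        abs_det_le_one_add_norm_sub_one_pow _
    _ ≤ _ := by
        gcongr
        exact (hβ _).trans (by rw [hquot]; gcongr; exact norm_mul_le _ _)

end GeneralLinearGroup

end Matrix

section TwistedCocycle

variable {M G : Type*} [Group G] (f : Equiv.Perm M) (α : MulAut G) (A : M → G)

theorem zpow_neg_twcN_succ (k : ℕ) (z : M) :
    (α ^ (-((k + 1 : ℕ) : ℤ))) (twcN f α A (k + 1) z) =
      (α ^ (-((k + 1 : ℕ) : ℤ))) (A ((f ^ k) z)) * (α ^ (-(k : ℤ))) (twcN f α A k z) := by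
  rw [twcN, map_mul, ← MulAut.mul_apply, ← zpow_add_one]
  congr 3
  push_cast
  ring

theorem twc_natCast (k : ℕ) (z : M) : twc f α A k z = twcN f α A k z := rfl

theorem map_zpow_neg_twcN {N : Type*} [CommMonoid N] (φ : G →* N) (k : ℕ) (z : M) :
    φ ((α ^ (-(k : ℤ))) (twcN f α A k z)) =
      ∏ l ∈ Finset.range k, φ ((α ^ (-((l + 1 : ℕ) : ℤ))) (A ((f ^ l) z))) := by
  induction k with
  | zero => simp [twcN]
  | succ k ih => rw [zpow_neg_twcN_succ, map_mul, ih, Finset.prod_range_succ, mul_comm]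

end TwistedCocycle

section LinearTwistedCocycle

variable {M n : Type*} [Fintype n] [DecidableEq n]
  (f : Equiv.Perm M) (α : MulAut (GL n ℝ)) (A : M → GL n ℝ)

theorem abs_det_zpow_neg_twcN_le {x y : M} {k : ℕ} {a : ℕ → ℝ}
    (h : ∀ l < k,
      |((α ^ (-((l + 1 : ℕ) : ℤ))) (A ((f ^ l) y)) : Matrix n n ℝ).det| ≤
        a l * |((α ^ (-((l + 1 : ℕ) : ℤ))) (A ((f ^ l) x)) : Matrix n n ℝ).det|) :
    |((α ^ (-(k : ℤ))) (twcN f α A k y) : Matrix n n ℝ).det| ≤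
      (∏ l ∈ Finset.range k, a l) * |((α ^ (-(k : ℤ))) (twcN f α A k x) : Matrix n n ℝ).det| := by
  let det : GL n ℝ →* ℝ := Matrix.detMonoidHom.comp (Units.coeHom _)
  change |det _| ≤ _ * |det _|
  rw [map_zpow_neg_twcN, map_zpow_neg_twcN, Finset.abs_prod, Finset.abs_prod,
    ← Finset.prod_mul_distrib]
  exact Finset.prod_le_prod (fun _ _ ↦ abs_nonneg _) fun l hl ↦ h l (Finset.mem_range.1 hl)

end LinearTwistedCocycle

theorem Real.prod_one_add_mul_pow_le_exp {c r : ℝ} (hc : 0 ≤ c) (hr₀ : 0 ≤ r) (hr₁ : r < 1)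
    (k : ℕ) : ∏ l ∈ Finset.range k, (1 + c * r ^ l) ≤ Real.exp (c / (1 - r)) := by
  refine (Real.prod_one_add_le_exp_sum _ fun l ↦ by positivity).trans (Real.exp_le_exp.2 ?_)
  rw [← Finset.mul_sum, div_eq_mul_inv]
  gcongr
  exact sum_le_hasSum _ (fun l _ ↦ by positivity) (hasSum_geometric_of_lt_one hr₀ hr₁)

section Holder

variable {M : Type*} [MetricSpace M] {d : ℕ} {ν : ℝ} {A : M → GL (Fin d) ℝ}

theorem IsHolder.continuous (hν : 0 < ν) (hA : IsHolder ν A) : Continuous A := by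
  obtain ⟨C, -, hC⟩ := hA
  refine Units.isOpenEmbedding_val.continuous_iff.2 <| continuous_iff_continuousAt.2 fun z ↦
    tendsto_iff_norm_sub_tendsto_zero.2 <|
      squeeze_zero (fun _ ↦ norm_nonneg _) (fun w ↦ hC w z) ?_
  have hdist := ((continuous_id.dist (continuous_const (y := z))).rpow_const
    fun _ ↦ Or.inr hν.le).tendsto z |>.const_mul C
  simpa [Real.zero_rpow hν.ne'] using hdist

theorem IsHolder.exists_norm_inv_le [CompactSpace M] (hν : 0 < ν) (hA : IsHolder ν A) :
    ∃ K ≥ 0, ∀ z, ‖(((A z)⁻¹ : GL (Fin d) ℝ) : Matrix (Fin d) (Fin d) ℝ)‖ ≤ K := by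
  obtain ⟨K, hK⟩ := isCompact_univ.exists_bound_of_continuousOn
    (Units.continuous_coe_inv.comp (hA.continuous hν)).continuousOn
  exact ⟨max K 0, le_max_right _ _, fun z ↦ (hK z trivial).trans (le_max_left _ _)⟩

end Holder

section Shadowing

open Real

variable {M n : Type*} [PseudoMetricSpace M] [Fintype n] [DecidableEq n]
  {f : Equiv.Perm M} {α : MulAut (GL n ℝ)} {A : M → GL n ℝ} {CB CA K ρ ν γ E : ℝ}
  (hCB : 0 ≤ CB) (hCA : 0 ≤ CA) (hν : 0 ≤ ν) (hE : 0 ≤ E)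
  (hα : ∀ (m : ℤ) (T₁ T₂ : GL n ℝ),
    ‖((α ^ m) T₁ : Matrix n n ℝ) - (α ^ m) T₂‖ ≤
      CB * exp (ρ * |(m : ℝ)|) * ‖(T₁ : Matrix n n ℝ) - T₂‖)
  (hA : ∀ a b, ‖(A a : Matrix n n ℝ) - A b‖ ≤ CA * dist a b ^ ν)
  (hK : ∀ z, ‖(((A z)⁻¹ : GL n ℝ) : Matrix n n ℝ)‖ ≤ K)
include hCB hCA hν hE hα hA hK

theorem abs_det_zpow_neg_apply_le_of_dist_le (l : ℕ) {a b : M}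
    (hab : dist a b ≤ E * exp (-γ * l)) :
    |((α ^ (-((l + 1 : ℕ) : ℤ))) (A a) : Matrix n n ℝ).det| ≤
      (1 + CB * exp ρ * CA * E ^ ν * K * exp (ρ - ν * γ) ^ l) ^ Fintype.card n *
        |((α ^ (-((l + 1 : ℕ) : ℤ))) (A b) : Matrix n n ℝ).det| := by
  have habs : |((-((l + 1 : ℕ) : ℤ) : ℤ) : ℝ)| = l + 1 := by
    push_cast
    rw [abs_neg, abs_of_nonneg (by positivity)]
  have hstep : ∀ T : GL n ℝ, ‖((α ^ (-((l + 1 : ℕ) : ℤ))) T : Matrix n n ℝ) - 1‖ ≤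
      CB * exp (ρ * (l + 1)) * ‖(T : Matrix n n ℝ) - 1‖ := fun T ↦ by
    simpa only [map_one, Units.val_one, habs] using hα (-((l + 1 : ℕ) : ℤ)) T 1
  have hexp : exp (ρ * (l + 1)) * exp (-γ * l) ^ ν = exp ρ * exp (ρ - ν * γ) ^ l := by
    rw [← exp_mul, ← exp_nat_mul, ← exp_add, ← exp_add]
    ring_nf
  refine (Matrix.GeneralLinearGroup.abs_det_map_le _ (by positivity) hstep (A a) (A b)).trans ?_
  gcongr (1 + ?_) ^ _ * _
  calc CB * exp (ρ * (l + 1)) *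
        (‖(A a : Matrix n n ℝ) - A b‖ * ‖(((A b)⁻¹ : GL n ℝ) : Matrix n n ℝ)‖)
      ≤ CB * exp (ρ * (l + 1)) * (CA * (E * exp (-γ * l)) ^ ν * K) := by
        gcongr
        · exact (hA a b).trans (by gcongr)
        · exact hK b
    _ = CB * exp ρ * CA * E ^ ν * K * exp (ρ - ν * γ) ^ l := by
        rw [mul_rpow hE (exp_pos _).le]
        linear_combination CB * CA * E ^ ν * K * hexp

theorem norm_zpow_neg_twcN_mul_norm_inv_le (hK₀ : 0 ≤ K) (hργ : ρ < ν * γ) {k : ℕ} {B : ℝ}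
    (hcond : ∀ z, ‖((α ^ (-(k : ℤ))) (twcN f α A k z) : Matrix n n ℝ)‖ *
      ‖((((α ^ (-(k : ℤ))) (twcN f α A k z))⁻¹ : GL n ℝ) : Matrix n n ℝ)‖ ≤ B)
    {x y : M} (hxy : ∀ l < k, dist ((f ^ l) x) ((f ^ l) y) ≤ E * exp (-γ * l)) :
    ‖((α ^ (-(k : ℤ))) (twcN f α A k y) : Matrix n n ℝ)‖ *
        ‖((((α ^ (-(k : ℤ))) (twcN f α A k x))⁻¹ : GL n ℝ) : Matrix n n ℝ)‖ ≤
      B ^ 2 * exp (CB * exp ρ * CA * E ^ ν * K / (1 - exp (ρ - ν * γ))) := by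
  have hdet := abs_det_zpow_neg_twcN_le f α A
    (a := fun l ↦ (1 + CB * exp ρ * CA * E ^ ν * K * exp (ρ - ν * γ) ^ l) ^ Fintype.card n)
    fun l hl ↦ abs_det_zpow_neg_apply_le_of_dist_le hCB hCA hν hE hα hA hK l
      ((dist_comm ((f ^ l) y) _).trans_le (hxy l hl))
  rw [Finset.prod_pow] at hdet
  refine Matrix.GeneralLinearGroup.norm_mul_norm_inv_le_of_abs_det_le _ _ (by positivity)
    (hcond y) (hcond x) (hdet.trans ?_)
  gcongr
  exact Real.prod_one_add_mul_pow_le_exp (by positivity) (exp_pos _).le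
    (exp_lt_one_iff.2 (by linarith)) k

end Shadowing

theorem growth_estimate_shadowing_general {M : Type*} [MetricSpace M] [CompactSpace M] {d : ℕ}
    (f : M ≃ₜ M) (ν : ℝ) (hν : 0 < ν)
    (A : M → GL (Fin d) ℝ) (α : MulAut (GL (Fin d) ℝ))
    (hA : IsHolder ν A) (ρ θ δ γ : ℝ) (hρ : 0 < ρ) (hδ : 0 < δ)
    (hFB : FiberBunchedWith f.toEquiv α A ρ θ)
    (hlt : 4 * ρ + δ < ν * γ) :
    ∀ C₁ > 0, ∃ C' > 0, ∀ (x y : M) (n : ℕ),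
      (∀ k : ℕ, k ≤ n →
        dist ((f.toEquiv ^ k) x) ((f.toEquiv ^ k) y) ≤
          C₁ * Real.exp (-γ * k) * dist x y) →
      ∀ k : ℕ, k ≤ n →
        ‖(((α ^ (-(k : ℤ))) (twc f.toEquiv α A k y) : GL (Fin d) ℝ) :
            Matrix (Fin d) (Fin d) ℝ)‖ *
          ‖(((α ^ (-(k : ℤ))) ((twc f.toEquiv α A k x)⁻¹) : GL (Fin d) ℝ) :
            Matrix (Fin d) (Fin d) ℝ)‖ ≤
          C' * Real.exp ((4 * ρ + 2 * θ + δ) * k) := by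
  intro C₁ hC₁
  obtain ⟨K, hK₀, hK⟩ := hA.exists_norm_inv_le hν
  obtain ⟨CA, hCA, hHol⟩ := hA
  obtain ⟨CB, hCB, hcond, hlip, -⟩ := hFB
  set E := C₁ * Metric.diam (Set.univ : Set M) with hE
  set P := Real.exp (CB * Real.exp ρ * CA * E ^ ν * K / (1 - Real.exp (ρ - ν * γ)))
  refine ⟨CB ^ 2 * P, by positivity, fun x y n hsh k hk ↦ ?_⟩
  have hdist : ∀ l < k,
      dist ((f.toEquiv ^ l) x) ((f.toEquiv ^ l) y) ≤ E * Real.exp (-γ * l) := fun l hl ↦ by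
    refine (hsh l (by omega)).trans ?_
    rw [hE, mul_right_comm]
    gcongr
    exact Metric.dist_le_diam_of_mem isCompact_univ.isBounded trivial trivial
  rw [twc_natCast, twc_natCast, map_inv]
  calc _ ≤ (CB * Real.exp (θ * k)) ^ 2 * P := by
        refine norm_zpow_neg_twcN_mul_norm_inv_le (f := f.toEquiv) hCB.le hCA.le hν.le
          (by positivity) hlip hHol hK hK₀ (by linarith) (fun z ↦ ?_) hdist
        simpa only [twc_natCast, map_inv, Int.cast_natCast, Nat.abs_cast] using (hcond k z).le
    _ = CB ^ 2 * P * Real.exp (2 * θ * k) := by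
        rw [mul_pow, sq (Real.exp _), ← Real.exp_add]
        ring_nf
    _ ≤ _ := by
        gcongr
        nlinarith [(k.cast_nonneg : (0 : ℝ) ≤ k)]

/-- **Remark (growth estimate along exponentially shadowing orbits).** If `γ ∈ (0, λ)` and
`4ρ + δ < νγ`, then for every `C₁ > 0` there is `C' > 0` such that whenever
`d(f^k(x), f^k(y)) ≤ C₁ e^{-γk} d(x,y)` for all `0 ≤ k ≤ n`, one has
`‖α^{-k}(A_α^k(y))‖·‖α^{-k}(A_α^k(x)⁻¹)‖ ≤ C' e^{(4ρ+2θ+δ)k}` for all `0 ≤ k ≤ n`. -/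
theorem growth_estimate_shadowing {M : Type*} [MetricSpace M] [CompactSpace M] {d : ℕ}
    (f : M ≃ₜ M) (C ε lam τ ν : ℝ) (hν : 0 < ν)
    (hf : IsHyperbolicLPS f C ε lam τ)
    (A : M → GL (Fin d) ℝ) (α : MulAut (GL (Fin d) ℝ))
    (hA : IsHolder ν A) (ρ θ δ γ : ℝ) (hρ : 0 < ρ) (hθ : 0 < θ) (hδ : 0 < δ)
    (hFB : FiberBunchedWith f.toEquiv α A ρ θ)
    (hγ : 0 < γ ∧ γ < lam) (hlt : 4 * ρ + δ < ν * γ) :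
    ∀ C₁ > 0, ∃ C' > 0, ∀ (x y : M) (n : ℕ),
      (∀ k : ℕ, k ≤ n →
        dist ((f.toEquiv ^ k) x) ((f.toEquiv ^ k) y) ≤
          C₁ * Real.exp (-γ * k) * dist x y) →
      ∀ k : ℕ, k ≤ n →
        ‖(((α ^ (-(k : ℤ))) (twc f.toEquiv α A k y) : GL (Fin d) ℝ) :
            Matrix (Fin d) (Fin d) ℝ)‖ *
          ‖(((α ^ (-(k : ℤ))) ((twc f.toEquiv α A k x)⁻¹) : GL (Fin d) ℝ) :
            Matrix (Fin d) (Fin d) ℝ)‖ ≤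
          C' * Real.exp ((4 * ρ + 2 * θ + δ) * k) :=
  growth_estimate_shadowing_general f ν hν A α hA ρ θ δ γ hρ hδ hFB hlt
end

section
/- Let f : M → M be a hyperbolic homeomorphism with local product structure on a compact metric space (M,d), let A, B : M → GL(d,ℝ) be ν-Hölder continuous, α an automorphism of GL(d,ℝ), and suppose the α-twisted cocycles A_α and B_α are fiber-bunched. Suppose x ∈ M is a fixed point of f with A(x) = B(x). For y ∈ W^s(x) define P(y) := H^{s,A,α}_{xy} · (H^{s,B,α}_{xy})^{-1}. Then A_α^n(y) = P(f^n(y)) · B_α^n(y) · α^n(P(y))^{-1} for every y ∈ W^s(x) and every n ∈ ℕ. -/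
open scoped Matrix.Norms.L2Operator

/-!
The holonomies at a fixed point `x` are equivariant: passing from `y` to `f y` shifts the
defining sequence by one step, so `α (H_{xy}) = A(y)⁻¹ · H_{x,f y} · A(x)`, the limit commuting
with `α` because fiber bunching makes `α` Lipschitz. Since `A(x) = B(x)`, the transfer map
`P = H^A · (H^B)⁻¹` therefore solves the cohomological equation `A(y) · α(P y) = P(f y) · B(y)`
along the `f`-invariant set `W^s(x)`, and iterating it gives the claim.
-/

open Filter Topology

section TwistedCocycle

variable {M G : Type*} [Group G] (f : Equiv.Perm M) (α : MulAut G)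

theorem twcN_succ_eq_mul_pow_apply (A : M → G) (n : ℕ) (x : M) :
    twcN f α A (n + 1) x = twcN f α A n (f x) * (α ^ n) (A x) := by
  induction n generalizing x with
  | zero => simp [twcN]
  | succ n ih =>
    rw [twcN, ih, map_mul, ← mul_assoc, ← MulAut.mul_apply, ← pow_succ',
      pow_succ, Equiv.Perm.mul_apply]
    rfl

theorem twcN_eq_mul_twcN_mul_inv_of_mapsTo {A B P : M → G} {S : Set M}
    (hS : Set.MapsTo f S S) (hP : ∀ z ∈ S, A z * α (P z) = P (f z) * B z)
    {y : M} (hy : y ∈ S) (n : ℕ) :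
    twcN f α A n y = P ((f ^ n) y) * twcN f α B n y * ((α ^ n) (P y))⁻¹ := by
  induction n with
  | zero => simp [twcN]
  | succ n ih =>
    have hPn := hP _ (hS.perm_pow n hy)
    rw [twcN, twcN, ih, map_mul, map_mul, map_inv, ← MulAut.mul_apply, ← pow_succ',
      ← mul_assoc, ← mul_assoc, hPn, pow_succ' f, Equiv.Perm.mul_apply]
    group

def stableHolSeq (A : M → G) (a b : M) (n : ℕ) : G :=
  (α ^ (-(n : ℤ))) ((twc f α A n b)⁻¹ * twc f α A n a)

theorem map_stableHolSeq_succ {A : M → G} {x : M} (hx : f x = x) (y : M) (n : ℕ) :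
    α (stableHolSeq f α A x y (n + 1)) = (A y)⁻¹ * stableHolSeq f α A x (f y) n * A x := by
  have hα : ∀ g, α ((α ^ (-((n + 1 : ℕ) : ℤ))) g) = (α ^ (-(n : ℤ))) g := fun g => by
    rw [← MulAut.mul_apply, ← zpow_one_add]; congr 2; push_cast; ring
  have hα' : ∀ g, (α ^ (-(n : ℤ))) ((α ^ n) g) = g := fun g => by
    rw [← zpow_natCast, ← MulAut.mul_apply, zpow_neg, inv_mul_cancel, MulAut.one_apply]
  change α ((α ^ _) ((twcN f α A (n + 1) y)⁻¹ * twcN f α A (n + 1) x)) = _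
  rw [twcN_succ_eq_mul_pow_apply, twcN_succ_eq_mul_pow_apply, hx, hα,
    show ∀ u v w z : G, (u * v)⁻¹ * (w * z) = v⁻¹ * (u⁻¹ * w) * z from fun _ _ _ _ => by group,
    map_mul, map_mul, map_inv, hα', hα']
  rfl

end TwistedCocycle

theorem apply_mem_globalStable {M : Type*} [MetricSpace M] {f : Equiv.Perm M} {ε : ℝ}
    {x y : M} (hy : y ∈ globalStable f ε x) : f y ∈ globalStable f ε (f x) := by
  obtain ⟨m, hm⟩ := hy
  have hshift : ∀ (k : ℕ) (z : M), (f ^ k) ((f ^ m) (f z)) = (f ^ (k + 1)) ((f ^ m) z) :=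
    fun k z => by
      simp only [← Equiv.Perm.mul_apply, ← pow_succ, ← pow_add, Nat.add_assoc, Nat.add_comm 1]
  exact ⟨m, fun k => by simpa only [localStable, Set.mem_ofPred_eq, hshift] using hm (k + 1)⟩

theorem mapsTo_globalStable {M : Type*} [MetricSpace M] {f : Equiv.Perm M} {x : M}
    (hx : f x = x) (ε : ℝ) : Set.MapsTo f (globalStable f ε x) (globalStable f ε x) :=
  fun _ hy => hx ▸ apply_mem_globalStable hy

theorem Units.tendsto_val_map_of_norm_sub_le {R ι : Type*} [SeminormedRing R]
    {φ : Rˣ → Rˣ} {K : ℝ} (hφ : ∀ a b : Rˣ, ‖(φ a : R) - φ b‖ ≤ K * ‖(a : R) - b‖)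
    {l : Filter ι} {u : ι → Rˣ} {a : Rˣ} (hu : Tendsto (fun i => (u i : R)) l (𝓝 a)) :
    Tendsto (fun i => (φ (u i) : R)) l (𝓝 (φ a : R)) := by
  rw [tendsto_iff_norm_sub_tendsto_zero] at hu ⊢
  refine squeeze_zero (fun _ => norm_nonneg _) (fun i => hφ (u i) a) ?_
  simpa using hu.const_mul K

section Holonomy

variable {M : Type*} [MetricSpace M] {d : ℕ} {f : Equiv.Perm M} {α : MulAut (GL (Fin d) ℝ)}

theorem FiberBunched.exists_norm_sub_map_le {A : M → GL (Fin d) ℝ} {ν lam : ℝ}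
    (hA : FiberBunched f α A ν lam) :
    ∃ K : ℝ, ∀ T₁ T₂ : GL (Fin d) ℝ,
      ‖((α T₁ : GL (Fin d) ℝ) : Matrix (Fin d) (Fin d) ℝ) - α T₂‖ ≤
        K * ‖(T₁ : Matrix (Fin d) (Fin d) ℝ) - T₂‖ := by
  obtain ⟨_, _, -, -, -, _, -, -, hLip, -⟩ := hA
  exact ⟨_, by simpa only [zpow_one] using hLip 1⟩

theorem IsStableHol.map_eq {A : M → GL (Fin d) ℝ} {x y : M} {H H' : GL (Fin d) ℝ} {K : ℝ}
    (hα : ∀ T₁ T₂ : GL (Fin d) ℝ,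
      ‖((α T₁ : GL (Fin d) ℝ) : Matrix (Fin d) (Fin d) ℝ) - α T₂‖ ≤
        K * ‖(T₁ : Matrix (Fin d) (Fin d) ℝ) - T₂‖)
    (hx : f x = x) (hy : IsStableHol f α A x y H) (hfy : IsStableHol f α A x (f y) H') :
    α H = (A y)⁻¹ * H' * A x := by
  have hlim : Tendsto (fun n => (α (stableHolSeq f α A x y (n + 1)) : Matrix (Fin d) (Fin d) ℝ))
      atTop (𝓝 (α H : Matrix (Fin d) (Fin d) ℝ)) :=
    Units.tendsto_val_map_of_norm_sub_le hα (hy.comp (tendsto_add_atTop_nat 1))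
  have hlim' : Tendsto (fun n => (α (stableHolSeq f α A x y (n + 1)) : Matrix (Fin d) (Fin d) ℝ))
      atTop (𝓝 ((A y)⁻¹ * H' * A x : GL (Fin d) ℝ)) := by
    simp only [map_stableHolSeq_succ f α hx, Units.val_mul]
    exact (hfy.const_mul _).mul_const _
  exact Units.ext (tendsto_nhds_unique hlim hlim')

end Holonomy

theorem transfer_map_intertwines_general {M : Type*} [MetricSpace M]
    {d : ℕ} (f : M ≃ₜ M) (ε lam ν : ℝ)
    (A B : M → GL (Fin d) ℝ) (α : MulAut (GL (Fin d) ℝ))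
    (hFA : FiberBunched f.toEquiv α A ν lam)
    (x : M) (hx : f x = x) (hAB : A x = B x)
    (HA HB : M → GL (Fin d) ℝ)
    (hHA : ∀ y ∈ globalStable f.toEquiv ε x, IsStableHol f.toEquiv α A x y (HA y))
    (hHB : ∀ y ∈ globalStable f.toEquiv ε x, IsStableHol f.toEquiv α B x y (HB y)) :
    ∀ y ∈ globalStable f.toEquiv ε x, ∀ n : ℕ,
      twc f.toEquiv α A n y =
        (HA ((f.toEquiv ^ (n : ℤ)) y) * (HB ((f.toEquiv ^ (n : ℤ)) y))⁻¹) *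
          twc f.toEquiv α B n y *
          ((α ^ (n : ℤ)) (HA y * (HB y)⁻¹))⁻¹ := by
  obtain ⟨K, hα⟩ := FiberBunched.exists_norm_sub_map_le hFA
  have hS := mapsTo_globalStable (f := f.toEquiv) hx ε
  have hP : ∀ z ∈ globalStable f.toEquiv ε x,
      A z * α (HA z * (HB z)⁻¹) = HA (f.toEquiv z) * (HB (f.toEquiv z))⁻¹ * B z := by
    intro z hz
    have hEA := (hHA z hz).map_eq hα hx (hHA _ (hS hz))
    have hEB := (hHB z hz).map_eq hα hx (hHB _ (hS hz))
    rw [map_mul, map_inv, hEA, hEB, hAB]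
    group
  intro y hy n
  simp only [zpow_natCast]
  exact twcN_eq_mul_twcN_mul_inv_of_mapsTo f.toEquiv α hS hP hy n

/-- **The transfer map intertwines the cocycles on the stable set of a fixed point.**
If `x` is a fixed point of `f` with `A(x) = B(x)` and
`P(y) = H^{s,A,α}_{xy}·(H^{s,B,α}_{xy})⁻¹`, then
`A_α^n(y) = P(f^n(y)) · B_α^n(y) · α^n(P(y))⁻¹` for every `y ∈ W^s(x)` and `n ∈ ℕ`. -/
theorem transfer_map_intertwines {M : Type*} [MetricSpace M] [CompactSpace M]
    {d : ℕ} (f : M ≃ₜ M) (C ε lam τ ν : ℝ) (hν : 0 < ν)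
    (hf : IsHyperbolicLPS f C ε lam τ)
    (A B : M → GL (Fin d) ℝ) (α : MulAut (GL (Fin d) ℝ))
    (hA : IsHolder ν A) (hB : IsHolder ν B)
    (hFA : FiberBunched f.toEquiv α A ν lam) (hFB : FiberBunched f.toEquiv α B ν lam)
    (x : M) (hx : f x = x) (hAB : A x = B x)
    (HA HB : M → GL (Fin d) ℝ)
    (hHA : ∀ y ∈ globalStable f.toEquiv ε x, IsStableHol f.toEquiv α A x y (HA y))
    (hHB : ∀ y ∈ globalStable f.toEquiv ε x, IsStableHol f.toEquiv α B x y (HB y)) :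
    ∀ y ∈ globalStable f.toEquiv ε x, ∀ n : ℕ,
      twc f.toEquiv α A n y =
        (HA ((f.toEquiv ^ (n : ℤ)) y) * (HB ((f.toEquiv ^ (n : ℤ)) y))⁻¹) *
          twc f.toEquiv α B n y *
          ((α ^ (n : ℤ)) (HA y * (HB y)⁻¹))⁻¹ :=
  transfer_map_intertwines_general f ε lam ν A B α hFA x hx hAB HA HB hHA hHB
end

section
/- Let f : M → M be a hyperbolic homeomorphism with local product structure on a compact metric space (M,d), let A, B : M → GL(d,ℝ) be ν-Hölder continuous, α an automorphism of GL(d,ℝ), and suppose the α-twisted cocycles A_α and B_α are fiber-bunched. Suppose x ∈ M is a fixed point of f with A(x) = B(x), and let y ∈ W^s(x). Then the sequence α^{-n}(A_α^n(y)^{-1} · B_α^n(y)) converges as n → +∞ to H^{s,A,α}_{xy} · (H^{s,B,α}_{xy})^{-1}, where H^{s,A,α} and H^{s,B,α} denote the stable holonomies of the cocycles A_α and B_α. -/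
open scoped Matrix.Norms.L2Operator

/-!
The transfer map is obtained by splitting `A_α^n(y)⁻¹ B_α^n(y)` through the fixed point:
since `A` and `B` agree at `x = f(x)`, the cocycles `A_α^n(x)` and `B_α^n(x)` coincide, so
`α^{-n}(A_α^n(y)⁻¹ B_α^n(y)) = α^{-n}(A_α^n(y)⁻¹ A_α^n(x)) · α^{-n}(B_α^n(y)⁻¹ B_α^n(x))⁻¹`,
and the two factors converge to the holonomies `H^{s,A,α}_{xy}` and `H^{s,B,α}_{xy}`; inversion is
continuous on the units of a complete normed ring.
-/

theorem twcN_congr_of_eqOn_orbit {M G : Type*} [Group G] (f : Equiv.Perm M) (α : MulAut G)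
    {A B : M → G} {x : M} {n : ℕ} (h : ∀ k < n, A ((f ^ k) x) = B ((f ^ k) x)) :
    twcN f α A n x = twcN f α B n x := by
  induction n with
  | zero => rfl
  | succ n ih =>
    rw [twcN, twcN, h n n.lt_succ_self, ih fun k hk => h k (hk.trans n.lt_succ_self)]

theorem twc_natCast_congr_of_isFixedPt {M G : Type*} [Group G] (f : Equiv.Perm M)
    (α : MulAut G) {A B : M → G} {x : M} (hx : Function.IsFixedPt f x) (hAB : A x = B x)
    (n : ℕ) : twc f α A n x = twc f α B n x :=
  twcN_congr_of_eqOn_orbit f α fun k _ => by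
    rw [Equiv.Perm.coe_pow, (hx.iterate k).eq, hAB]

theorem map_inv_mul_eq_mul_inv_of_eq {G H F : Type*} [Group G] [Group H] [FunLike F G H]
    [MonoidHomClass F G H] (φ : F) {a b c d : G} (h : c = d) :
    φ (a⁻¹ * b) = φ (a⁻¹ * c) * (φ (b⁻¹ * d))⁻¹ := by
  rw [← map_inv, ← map_mul, h]
  group

theorem Units.tendsto_val_mul_inv {R ι : Type*} [NormedRing R] [CompleteSpace R]
    {l : Filter ι} {u v : ι → Rˣ} {U V : Rˣ}
    (hu : Filter.Tendsto (fun i => (u i : R)) l (nhds U))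
    (hv : Filter.Tendsto (fun i => (v i : R)) l (nhds V)) :
    Filter.Tendsto (fun i => ((u i * (v i)⁻¹ : Rˣ) : R)) l (nhds ((U * V⁻¹ : Rˣ) : R)) := by
  have hinv := (NormedRing.inverse_continuousAt V).tendsto.comp hv
  simp only [Function.comp_def, Ring.inverse_unit] at hinv
  simpa only [Units.val_mul] using hu.mul hinv

theorem convergence_to_transfer_map_general {M : Type*} [MetricSpace M]
    {d : ℕ} (f : M ≃ₜ M)
    (A B : M → GL (Fin d) ℝ) (α : MulAut (GL (Fin d) ℝ))
    (x : M) (hx : f x = x) (hAB : A x = B x)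
    (y : M)
    (HsA HsB : GL (Fin d) ℝ)
    (hHsA : IsStableHol f.toEquiv α A x y HsA)
    (hHsB : IsStableHol f.toEquiv α B x y HsB) :
    Filter.Tendsto
      (fun n : ℕ =>
        (((α ^ (-(n : ℤ))) ((twc f.toEquiv α A n y)⁻¹ * twc f.toEquiv α B n y) :
          GL (Fin d) ℝ) : Matrix (Fin d) (Fin d) ℝ))
      Filter.atTop (nhds ((HsA * HsB⁻¹ : GL (Fin d) ℝ) : Matrix (Fin d) (Fin d) ℝ)) := by
  refine (Units.tendsto_val_mul_inv hHsA hHsB).congr fun n => ?_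
  exact congrArg Units.val (map_inv_mul_eq_mul_inv_of_eq _
    (twc_natCast_congr_of_isFixedPt f.toEquiv α hx hAB n)).symm

/-- **Convergence to the transfer map.** If `x` is a fixed point of `f` with `A(x) = B(x)`
and `y ∈ W^s(x)`, then `α^{-n}(A_α^n(y)⁻¹ · B_α^n(y))` converges to
`H^{s,A,α}_{xy}·(H^{s,B,α}_{xy})⁻¹` as `n → ∞`. -/
theorem convergence_to_transfer_map {M : Type*} [MetricSpace M] [CompactSpace M]
    {d : ℕ} (f : M ≃ₜ M) (C ε lam τ ν : ℝ) (hν : 0 < ν)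
    (hf : IsHyperbolicLPS f C ε lam τ)
    (A B : M → GL (Fin d) ℝ) (α : MulAut (GL (Fin d) ℝ))
    (hA : IsHolder ν A) (hB : IsHolder ν B)
    (hFA : FiberBunched f.toEquiv α A ν lam) (hFB : FiberBunched f.toEquiv α B ν lam)
    (x : M) (hx : f x = x) (hAB : A x = B x)
    (y : M) (hy : y ∈ globalStable f.toEquiv ε x)
    (HsA HsB : GL (Fin d) ℝ)
    (hHsA : IsStableHol f.toEquiv α A x y HsA)
    (hHsB : IsStableHol f.toEquiv α B x y HsB) :
    Filter.Tendsto
      (fun n : ℕ =>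
        (((α ^ (-(n : ℤ))) ((twc f.toEquiv α A n y)⁻¹ * twc f.toEquiv α B n y) :
          GL (Fin d) ℝ) : Matrix (Fin d) (Fin d) ℝ))
      Filter.atTop (nhds ((HsA * HsB⁻¹ : GL (Fin d) ℝ) : Matrix (Fin d) (Fin d) ℝ)) :=
  convergence_to_transfer_map_general f A B α x hx hAB y HsA HsB hHsA hHsB
end
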